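/- arXiv:2202.00083 — 3 statements merged into one kernel-verified Lean document; each statement's English description precedes it below -/
import Mathlib

section
/- Let V and W be finite-dimensional real inner product spaces, let J be a compatible complex structure on V, and let (e_1, …, e_n, η) be an orthonormal basis of V × W (so the 'normal' part consists of the single unit vector η). Writing x¹ for the V-component of x ∈ V × W, one has Σ_{j=1}^{n} ( ⟨e_j¹, η¹⟩² − ⟨e_j¹, J(η¹)⟩² ) = −‖η¹‖⁴. (This is the codimension-one formula used to prove the paper's Theorem 3.2 on hypersurfaces of ℂP^{m/2} × M.) -/
open scoped RealInnerProductSpace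

/-!
The first components of an orthonormal basis of `V × W` form a Parseval frame of `V`, so
removing `η` from the basis gives `∑ⱼ ⟪e_j¹, v⟫² = ‖v‖² - ⟪η¹, v⟫²` for every `v : V`.
Apply this to `v = η¹` and `v = J η¹`: since `J` is an isometry with `⟪η¹, J η¹⟫ = 0`, the
difference of the two sums is `(‖η¹‖² - ‖η¹‖⁴) - ‖η¹‖² = -‖η¹‖⁴`.
-/

section ComplexStructure

variable {V : Type*} [NormedAddCommGroup V] [InnerProductSpace ℝ V]

theorem norm_apply_eq_of_inner_apply_apply {J : V → V} (hJiso : ∀ x y : V, ⟪J x, J y⟫ = ⟪x, y⟫)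
    (x : V) : ‖J x‖ = ‖x‖ := by
  rw [norm_eq_sqrt_real_inner, norm_eq_sqrt_real_inner, hJiso]

theorem inner_self_apply_eq_zero_of_apply_apply_eq_neg {J : V → V}
    (hJiso : ∀ x y : V, ⟪J x, J y⟫ = ⟪x, y⟫) (hJsq : ∀ x : V, J (J x) = -x) (x : V) :
    ⟪x, J x⟫ = 0 := by
  have h := hJiso x (J x)
  rw [hJsq, inner_neg_right, real_inner_comm] at h
  linarith

end ComplexStructure

namespace OrthonormalBasis

variable {ι V W : Type*} [Fintype ι] [NormedAddCommGroup V] [InnerProductSpace ℝ V]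
  [NormedAddCommGroup W] [InnerProductSpace ℝ W]

theorem sum_sq_inner_fst (b : OrthonormalBasis ι ℝ (WithLp 2 (V × W))) (v : V) :
    ∑ i, ⟪(b i).fst, v⟫ ^ 2 = ‖v‖ ^ 2 := by
  simpa [real_inner_comm] using b.sum_sq_inner_right (WithLp.toLp 2 (v, (0 : W)))

theorem sum_inl_sq_inner_fst (b : OrthonormalBasis (ι ⊕ Fin 1) ℝ (WithLp 2 (V × W))) (v : V) :
    ∑ j, ⟪(b (Sum.inl j)).fst, v⟫ ^ 2 = ‖v‖ ^ 2 - ⟪(b (Sum.inr 0)).fst, v⟫ ^ 2 := by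
  rw [← b.sum_sq_inner_fst v, Fintype.sum_sum_type, Fin.sum_univ_one]
  ring

end OrthonormalBasis

theorem stmt_2_general {V W : Type*} [NormedAddCommGroup V] [InnerProductSpace ℝ V]
    [NormedAddCommGroup W] [InnerProductSpace ℝ W]
    (J : V →ₗ[ℝ] V)
    (hJiso : ∀ x y : V, ⟪J x, J y⟫ = ⟪x, y⟫)
    (hJsq : ∀ x : V, J (J x) = -x)
    {n : ℕ} (b : OrthonormalBasis (Fin n ⊕ Fin 1) ℝ (WithLp 2 (V × W))) :
    ∑ j : Fin n,
      (⟪(b (Sum.inl j)).fst, (b (Sum.inr 0)).fst⟫ ^ 2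
        - ⟪(b (Sum.inl j)).fst, J ((b (Sum.inr 0)).fst)⟫ ^ 2)
      = -‖(b (Sum.inr 0)).fst‖ ^ 4 := by
  rw [Finset.sum_sub_distrib, b.sum_inl_sq_inner_fst, b.sum_inl_sq_inner_fst,
    norm_apply_eq_of_inner_apply_apply hJiso,
    inner_self_apply_eq_zero_of_apply_apply_eq_neg hJiso hJsq, real_inner_self_eq_norm_sq]
  ring

/-- Codimension-one formula used in the paper's Theorem 3.2. -/
theorem stmt_2 {V W : Type*} [NormedAddCommGroup V] [InnerProductSpace ℝ V]
    [FiniteDimensional ℝ V] [NormedAddCommGroup W] [InnerProductSpace ℝ W]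
    [FiniteDimensional ℝ W] (J : V →ₗ[ℝ] V)
    (hJiso : ∀ x y : V, ⟪J x, J y⟫ = ⟪x, y⟫)
    (hJsq : ∀ x : V, J (J x) = -x)
    {n : ℕ} (b : OrthonormalBasis (Fin n ⊕ Fin 1) ℝ (WithLp 2 (V × W))) :
    ∑ j : Fin n,
      (⟪(b (Sum.inl j)).fst, (b (Sum.inr 0)).fst⟫ ^ 2
        - ⟪(b (Sum.inl j)).fst, J ((b (Sum.inr 0)).fst)⟫ ^ 2)
      = -‖(b (Sum.inr 0)).fst‖ ^ 4 :=
  stmt_2_general J hJiso hJsq b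
end

section
/- Let V and W be finite-dimensional real inner product spaces, let J be a compatible complex structure on V, and let (e_1, …, e_n, η_1, η_2) be an orthonormal basis of V × W. Writing x¹ for the V-component of x ∈ V × W, one has Σ_{j=1}^{n} Σ_{k=1}^{2} ( ⟨e_j¹, η_k¹⟩² − ⟨e_j¹, J(η_k¹)⟩² ) = −‖η₁¹‖⁴ − ‖η₂¹‖⁴ − 2⟨η₁¹, η₂¹⟩² + 2⟨J(η₁¹), η₂¹⟩², this quantity is ≤ 0, and it equals 0 if and only if η₂¹ = J(η₁¹) or η₂¹ = −J(η₁¹). (This packages Equation (MAIND22) and the equality analysis in the proof of the paper's Lemma 3.4.) -/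
/-!
Write `u, w` for the `V`-components of `η₁, η₂`. Parseval's identity for `b` applied to `(v, 0)`
gives `∑ⱼ ⟪e_j¹, v⟫² = ‖v‖² - ⟪u, v⟫² - ⟪w, v⟫²`; summing this over `v ∈ {u, w, Ju, Jw}` and using
that `J` is an isometry and skew yields the closed form. The closed form equals
`-½ ‖w - Ju‖² ‖w + Ju‖² - ½ (‖u‖² - ‖w‖²)² - 2 ⟪u, w⟫²`, a sum of non-positive terms, all of which
vanish exactly when `w = ± Ju`.
-/

open scoped RealInnerProductSpace

section ThreeVectors

variable {E : Type*} [NormedAddCommGroup E] [InnerProductSpace ℝ E]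

theorem neg_norm_pow_four_add_inner_sq_eq {u v w : E} (hv : ‖v‖ = ‖u‖) :
    -‖u‖ ^ 4 - ‖w‖ ^ 4 - 2 * ⟪u, w⟫ ^ 2 + 2 * ⟪v, w⟫ ^ 2
      = -(‖w - v‖ ^ 2 * ‖w + v‖ ^ 2) / 2 - (‖u‖ ^ 2 - ‖w‖ ^ 2) ^ 2 / 2 - 2 * ⟪u, w⟫ ^ 2 := by
  rw [norm_sub_sq_real, norm_add_sq_real, hv, real_inner_comm w v]
  ring

theorem neg_norm_pow_four_add_inner_sq_nonpos {u v w : E} (hv : ‖v‖ = ‖u‖) :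
    -‖u‖ ^ 4 - ‖w‖ ^ 4 - 2 * ⟪u, w⟫ ^ 2 + 2 * ⟪v, w⟫ ^ 2 ≤ 0 := by
  rw [neg_norm_pow_four_add_inner_sq_eq hv]
  nlinarith [mul_nonneg (sq_nonneg ‖w - v‖) (sq_nonneg ‖w + v‖), sq_nonneg (‖u‖ ^ 2 - ‖w‖ ^ 2),
    sq_nonneg ⟪u, w⟫]

theorem neg_norm_pow_four_add_inner_sq_eq_zero_iff {u v w : E} (hv : ‖v‖ = ‖u‖)
    (huv : ⟪u, v⟫ = 0) :
    -‖u‖ ^ 4 - ‖w‖ ^ 4 - 2 * ⟪u, w⟫ ^ 2 + 2 * ⟪v, w⟫ ^ 2 = 0 ↔ w = v ∨ w = -v := by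
  rw [neg_norm_pow_four_add_inner_sq_eq hv]
  constructor
  · intro h
    have hprod : ‖w - v‖ ^ 2 * ‖w + v‖ ^ 2 = 0 := by
      nlinarith [mul_nonneg (sq_nonneg ‖w - v‖) (sq_nonneg ‖w + v‖),
        sq_nonneg (‖u‖ ^ 2 - ‖w‖ ^ 2), sq_nonneg ⟪u, w⟫]
    simpa [sub_eq_zero, add_eq_zero_iff_eq_neg] using hprod
  · rintro (rfl | rfl) <;> simp [hv, huv]

end ThreeVectors

section ComplexStructure

variable {V : Type*} [NormedAddCommGroup V] [InnerProductSpace ℝ V] {J : V →ₗ[ℝ] V}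

theorem norm_apply_eq_of_inner_map_map (hJiso : ∀ x y : V, ⟪J x, J y⟫ = ⟪x, y⟫) (x : V) :
    ‖J x‖ = ‖x‖ := by
  rw [norm_eq_sqrt_real_inner, hJiso, ← norm_eq_sqrt_real_inner]

theorem inner_map_left_eq_neg_inner_map_right (hJiso : ∀ x y : V, ⟪J x, J y⟫ = ⟪x, y⟫)
    (hJsq : ∀ x : V, J (J x) = -x) (x y : V) : ⟪J x, y⟫ = -⟪x, J y⟫ := by
  rw [← hJiso x (J y), hJsq, inner_neg_right, neg_neg]

theorem inner_self_map_eq_zero (hJiso : ∀ x y : V, ⟪J x, J y⟫ = ⟪x, y⟫)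
    (hJsq : ∀ x : V, J (J x) = -x) (x : V) : ⟪x, J x⟫ = 0 := by
  have h := inner_map_left_eq_neg_inner_map_right hJiso hJsq x x
  rw [real_inner_comm] at h
  linarith

end ComplexStructure

section ProductBasis

variable {V W : Type*} [NormedAddCommGroup V] [InnerProductSpace ℝ V]
  [NormedAddCommGroup W] [InnerProductSpace ℝ W]

theorem OrthonormalBasis.sum_sq_inner_fst_s7 {ι : Type*} [Fintype ι]
    (b : OrthonormalBasis ι ℝ (WithLp 2 (V × W))) (v : V) :
    ∑ i, ⟪(b i).fst, v⟫ ^ 2 = ‖v‖ ^ 2 := by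
  have h := b.sum_sq_inner_right (WithLp.toLp 2 (v, 0))
  rw [← real_inner_self_eq_norm_sq] at h ⊢
  simpa only [WithLp.prod_inner_apply, WithLp.ofLp_toLp, WithLp.ofLp_fst, inner_zero_right,
    add_zero] using h

theorem OrthonormalBasis.sum_sq_inner_fst_inl {ι κ : Type*} [Fintype ι] [Fintype κ]
    (b : OrthonormalBasis (ι ⊕ κ) ℝ (WithLp 2 (V × W))) (v : V) :
    ∑ j, ⟪(b (Sum.inl j)).fst, v⟫ ^ 2 = ‖v‖ ^ 2 - ∑ k, ⟪(b (Sum.inr k)).fst, v⟫ ^ 2 := by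
  rw [← b.sum_sq_inner_fst_s7 v, Fintype.sum_sum_type, add_sub_cancel_right]

theorem OrthonormalBasis.sum_sum_sq_inner_sub_sq_inner_map {ι : Type*} [Fintype ι]
    {J : V →ₗ[ℝ] V} (hJiso : ∀ x y : V, ⟪J x, J y⟫ = ⟪x, y⟫) (hJsq : ∀ x : V, J (J x) = -x)
    (b : OrthonormalBasis (ι ⊕ Fin 2) ℝ (WithLp 2 (V × W))) :
    ∑ j, ∑ k : Fin 2,
      (⟪(b (Sum.inl j)).fst, (b (Sum.inr k)).fst⟫ ^ 2
        - ⟪(b (Sum.inl j)).fst, J ((b (Sum.inr k)).fst)⟫ ^ 2)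
      = -‖(b (Sum.inr 0)).fst‖ ^ 4 - ‖(b (Sum.inr 1)).fst‖ ^ 4
        - 2 * ⟪(b (Sum.inr 0)).fst, (b (Sum.inr 1)).fst⟫ ^ 2
        + 2 * ⟪J ((b (Sum.inr 0)).fst), (b (Sum.inr 1)).fst⟫ ^ 2 := by
  set u := (b (Sum.inr 0)).fst
  set w := (b (Sum.inr 1)).fst
  rw [Finset.sum_comm]
  simp only [Finset.sum_sub_distrib, b.sum_sq_inner_fst_inl, Fin.sum_univ_two,
    norm_apply_eq_of_inner_map_map hJiso, inner_self_map_eq_zero hJiso hJsq,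
    real_inner_self_eq_norm_sq]
  rw [real_inner_comm u w, real_inner_comm (J u) w,
    inner_map_left_eq_neg_inner_map_right hJiso hJsq]
  ring

end ProductBasis

theorem stmt_7_general {V W : Type*} [NormedAddCommGroup V] [InnerProductSpace ℝ V]
    [NormedAddCommGroup W] [InnerProductSpace ℝ W]
    (J : V →ₗ[ℝ] V)
    (hJiso : ∀ x y : V, ⟪J x, J y⟫ = ⟪x, y⟫)
    (hJsq : ∀ x : V, J (J x) = -x)
    {n : ℕ} (b : OrthonormalBasis (Fin n ⊕ Fin 2) ℝ (WithLp 2 (V × W))) :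
    (∑ j : Fin n, ∑ k : Fin 2,
      (⟪(b (Sum.inl j)).fst, (b (Sum.inr k)).fst⟫ ^ 2
        - ⟪(b (Sum.inl j)).fst, J ((b (Sum.inr k)).fst)⟫ ^ 2)
      = -‖(b (Sum.inr 0)).fst‖ ^ 4 - ‖(b (Sum.inr 1)).fst‖ ^ 4
        - 2 * ⟪(b (Sum.inr 0)).fst, (b (Sum.inr 1)).fst⟫ ^ 2
        + 2 * ⟪J ((b (Sum.inr 0)).fst), (b (Sum.inr 1)).fst⟫ ^ 2)
    ∧ (-‖(b (Sum.inr 0)).fst‖ ^ 4 - ‖(b (Sum.inr 1)).fst‖ ^ 4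
        - 2 * ⟪(b (Sum.inr 0)).fst, (b (Sum.inr 1)).fst⟫ ^ 2
        + 2 * ⟪J ((b (Sum.inr 0)).fst), (b (Sum.inr 1)).fst⟫ ^ 2 ≤ 0)
    ∧ (-‖(b (Sum.inr 0)).fst‖ ^ 4 - ‖(b (Sum.inr 1)).fst‖ ^ 4
        - 2 * ⟪(b (Sum.inr 0)).fst, (b (Sum.inr 1)).fst⟫ ^ 2
        + 2 * ⟪J ((b (Sum.inr 0)).fst), (b (Sum.inr 1)).fst⟫ ^ 2 = 0
      ↔ (b (Sum.inr 1)).fst = J ((b (Sum.inr 0)).fst)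
        ∨ (b (Sum.inr 1)).fst = -(J ((b (Sum.inr 0)).fst))) := by
  have hnorm := norm_apply_eq_of_inner_map_map hJiso
  exact ⟨b.sum_sum_sq_inner_sub_sq_inner_map hJiso hJsq,
    neg_norm_pow_four_add_inner_sq_nonpos (hnorm _),
    neg_norm_pow_four_add_inner_sq_eq_zero_iff (hnorm _) (inner_self_map_eq_zero hJiso hJsq _)⟩

/-- Equation (MAIND22) and the equality analysis in the proof of the paper's Lemma 3.4. -/
theorem stmt_7 {V W : Type*} [NormedAddCommGroup V] [InnerProductSpace ℝ V]
    [FiniteDimensional ℝ V] [NormedAddCommGroup W] [InnerProductSpace ℝ W]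
    [FiniteDimensional ℝ W] (J : V →ₗ[ℝ] V)
    (hJiso : ∀ x y : V, ⟪J x, J y⟫ = ⟪x, y⟫)
    (hJsq : ∀ x : V, J (J x) = -x)
    {n : ℕ} (b : OrthonormalBasis (Fin n ⊕ Fin 2) ℝ (WithLp 2 (V × W))) :
    (∑ j : Fin n, ∑ k : Fin 2,
      (⟪(b (Sum.inl j)).fst, (b (Sum.inr k)).fst⟫ ^ 2
        - ⟪(b (Sum.inl j)).fst, J ((b (Sum.inr k)).fst)⟫ ^ 2)
      = -‖(b (Sum.inr 0)).fst‖ ^ 4 - ‖(b (Sum.inr 1)).fst‖ ^ 4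
        - 2 * ⟪(b (Sum.inr 0)).fst, (b (Sum.inr 1)).fst⟫ ^ 2
        + 2 * ⟪J ((b (Sum.inr 0)).fst), (b (Sum.inr 1)).fst⟫ ^ 2)
    ∧ (-‖(b (Sum.inr 0)).fst‖ ^ 4 - ‖(b (Sum.inr 1)).fst‖ ^ 4
        - 2 * ⟪(b (Sum.inr 0)).fst, (b (Sum.inr 1)).fst⟫ ^ 2
        + 2 * ⟪J ((b (Sum.inr 0)).fst), (b (Sum.inr 1)).fst⟫ ^ 2 ≤ 0)
    ∧ (-‖(b (Sum.inr 0)).fst‖ ^ 4 - ‖(b (Sum.inr 1)).fst‖ ^ 4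
        - 2 * ⟪(b (Sum.inr 0)).fst, (b (Sum.inr 1)).fst⟫ ^ 2
        + 2 * ⟪J ((b (Sum.inr 0)).fst), (b (Sum.inr 1)).fst⟫ ^ 2 = 0
      ↔ (b (Sum.inr 1)).fst = J ((b (Sum.inr 0)).fst)
        ∨ (b (Sum.inr 1)).fst = -(J ((b (Sum.inr 0)).fst))) :=
  stmt_7_general J hJiso hJsq b
end

section
/- Let V and W be finite-dimensional real inner product spaces, let (J₁, J₂, J₃) be a compatible quaternionic structure on V, and let (e_1, …, e_n, η_1, …, η_d) be an orthonormal basis of V × W. Writing x¹ for the V-component of x ∈ V × W, for each s ∈ {1, 2, 3} one has Σ_{j=1}^{n} Σ_{β=1}^{d} ( ⟨e_j¹, η_β¹⟩² − Σ_{k=1}^{3} ⟨e_j¹, J_k(η_β¹)⟩² ) = −Σ_{k∈{1,2,3}, k≠s} Σ_{j=1}^{n} Σ_{β=1}^{d} ⟨J_k(η_β¹), e_j¹⟩² + Σ_{β=1}^{d} Σ_{l=1}^{d} ( ⟨J_s(η_β¹), η_l¹⟩² − ⟨η_β¹, η_l¹⟩² ). (This is the normal-vector identity (hMAIN) in the paper's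 Lemma 4.1, the algebraic core of the general second-variation formula in ℍP^{m₁/4} × M.) -/
/-!
Parseval's identity for the vector `(u, 0)` of `V × W` says that the squared `V`-components
`⟨e_j¹, u⟩²` and `⟨η_β¹, u⟩²` of a basis add up to `‖u‖²`. Applying it to `u = η_β¹` and to
`u = J_s η_β¹`, which have the same norm, and subtracting turns the `e`-sums of the `k = s` term
into `η`-sums; the terms `k ≠ s` appear unchanged on both sides.
-/

open scoped RealInnerProductSpace

open Finset

namespace OrthonormalBasis

variable {ι κ V W : Type*} [Fintype ι] [Fintype κ]
  [NormedAddCommGroup V] [InnerProductSpace ℝ V] [NormedAddCommGroup W] [InnerProductSpace ℝ W]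

theorem sum_sq_inner_fst_right (b : OrthonormalBasis ι ℝ (WithLp 2 (V × W))) (u : V) :
    ∑ i, ⟪(b i).fst, u⟫ ^ 2 = ‖u‖ ^ 2 := by
  have h := b.sum_sq_inner_right (WithLp.toLp 2 (u, (0 : W)))
  simpa [WithLp.prod_norm_sq_eq_of_L2] using h

theorem sum_inl_sq_inner_fst_right (b : OrthonormalBasis (ι ⊕ κ) ℝ (WithLp 2 (V × W))) (u : V) :
    ∑ j, ⟪(b (.inl j)).fst, u⟫ ^ 2 = ‖u‖ ^ 2 - ∑ l, ⟪u, (b (.inr l)).fst⟫ ^ 2 := by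
  rw [← b.sum_sq_inner_fst_right u, Fintype.sum_sum_type]
  simp only [real_inner_comm u, add_sub_cancel_right]

theorem sum_inl_sq_inner_fst_sub_sum {K : Type*} [Fintype K] [DecidableEq K]
    (b : OrthonormalBasis (ι ⊕ κ) ℝ (WithLp 2 (V × W))) (J : K → V → V) (s : K) (u : V)
    (hJ : ‖J s u‖ = ‖u‖) :
    ∑ j, (⟪(b (.inl j)).fst, u⟫ ^ 2 - ∑ k, ⟪(b (.inl j)).fst, J k u⟫ ^ 2)
      = -∑ k ∈ {s}ᶜ, ∑ j, ⟪(b (.inl j)).fst, J k u⟫ ^ 2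
        + ∑ l, (⟪J s u, (b (.inr l)).fst⟫ ^ 2 - ⟪u, (b (.inr l)).fst⟫ ^ 2) := by
  simp only [Fintype.sum_eq_add_sum_compl s, sum_sub_distrib, sum_add_distrib]
  rw [sum_comm (γ := K), sum_inl_sq_inner_fst_right, sum_inl_sq_inner_fst_right, hJ]
  ring

end OrthonormalBasis

theorem stmt_10_general {V W : Type*} [NormedAddCommGroup V] [InnerProductSpace ℝ V]
    [NormedAddCommGroup W] [InnerProductSpace ℝ W]
    (J : Fin 3 → (V →ₗ[ℝ] V))
    (hiso : ∀ (k : Fin 3) (x y : V), ⟪J k x, J k y⟫ = ⟪x, y⟫)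
    {n d : ℕ} (b : OrthonormalBasis (Fin n ⊕ Fin d) ℝ (WithLp 2 (V × W)))
    (s : Fin 3) :
    ∑ j : Fin n, ∑ β : Fin d,
      (⟪(b (Sum.inl j)).fst, (b (Sum.inr β)).fst⟫ ^ 2
        - ∑ k : Fin 3, ⟪(b (Sum.inl j)).fst, J k ((b (Sum.inr β)).fst)⟫ ^ 2)
      = -(∑ k ∈ ({s}ᶜ : Finset (Fin 3)), ∑ j : Fin n, ∑ β : Fin d,
            ⟪J k ((b (Sum.inr β)).fst), (b (Sum.inl j)).fst⟫ ^ 2)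
        + ∑ β : Fin d, ∑ l : Fin d,
            (⟪J s ((b (Sum.inr β)).fst), (b (Sum.inr l)).fst⟫ ^ 2
              - ⟪(b (Sum.inr β)).fst, (b (Sum.inr l)).fst⟫ ^ 2) := by
  have hnorm : ∀ u : V, ‖J s u‖ = ‖u‖ := fun u => by
    rw [norm_eq_sqrt_real_inner, hiso, ← norm_eq_sqrt_real_inner]
  have hβ β := b.sum_inl_sq_inner_fst_sub_sum (J ·) s (b (.inr β)).fst (hnorm _)
  simp only [real_inner_comm (b (.inl _)).fst]
  rw [sum_comm, sum_congr rfl fun β _ => hβ β, sum_add_distrib, sum_neg_distrib, sum_comm]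
  congr 2
  exact sum_congr rfl fun k _ => sum_comm

/-- Normal-vector identity (hMAIN) in the paper's Lemma 4.1. -/
theorem stmt_10 {V W : Type*} [NormedAddCommGroup V] [InnerProductSpace ℝ V]
    [FiniteDimensional ℝ V] [NormedAddCommGroup W] [InnerProductSpace ℝ W]
    [FiniteDimensional ℝ W] (J : Fin 3 → (V →ₗ[ℝ] V))
    (hiso : ∀ (k : Fin 3) (x y : V), ⟪J k x, J k y⟫ = ⟪x, y⟫)
    (hsq : ∀ (k : Fin 3) (x : V), J k (J k x) = -x)
    (hcomp : ∀ x : V, J 0 (J 1 x) = J 2 x)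
    {n d : ℕ} (b : OrthonormalBasis (Fin n ⊕ Fin d) ℝ (WithLp 2 (V × W)))
    (s : Fin 3) :
    ∑ j : Fin n, ∑ β : Fin d,
      (⟪(b (Sum.inl j)).fst, (b (Sum.inr β)).fst⟫ ^ 2
        - ∑ k : Fin 3, ⟪(b (Sum.inl j)).fst, J k ((b (Sum.inr β)).fst)⟫ ^ 2)
      = -(∑ k ∈ ({s}ᶜ : Finset (Fin 3)), ∑ j : Fin n, ∑ β : Fin d,
            ⟪J k ((b (Sum.inr β)).fst), (b (Sum.inl j)).fst⟫ ^ 2)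
        + ∑ β : Fin d, ∑ l : Fin d,
            (⟪J s ((b (Sum.inr β)).fst), (b (Sum.inr l)).fst⟫ ^ 2
              - ⟪(b (Sum.inr β)).fst, (b (Sum.inr l)).fst⟫ ^ 2) :=
  stmt_10_general J hiso b s
end
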